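/- Let G be a 2-edge-coloured graph and let K be any 2-edge-coloured complete graph on n ≥ 1 vertices, vertex-disjoint from G. Let H be the 2-edge-coloured graph on the disjoint union of the vertex sets of G and K containing all edges of G and of K with their original colours, together with all pairs {u, x} with u a vertex of G and x a vertex of K, each such joining pair being a red edge of H. Then for every natural number k ≥ n, the number of k-colourings of H equals k(k−1)(k−2)⋯(k−n+1) times the number of (k−n)-colourings of G. -/

import Mathlib

open SimpleGraph Polynomial

/-- A `k`-colouring of a mixed 2-edge-coloured graph with red edge graph `R`,
blue edge graph `B`, and extra uncoloured edge graph `F`. -/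
def IsMixedColouring {V : Type*} (R B F : SimpleGraph V) {k : ℕ} (c : V → Fin k) : Prop :=
  (∀ u v, (R ⊔ B ⊔ F).Adj u v → c u ≠ c v) ∧
  (∀ u x v y, R.Adj u x → B.Adj v y → c u = c v → c x ≠ c y)

/-- The number of `k`-colourings of the mixed 2-edge-coloured graph `(R, B, F)`. -/
noncomputable def numColourings {V : Type*} (R B F : SimpleGraph V) (k : ℕ) : ℕ :=
  Nat.card {c : V → Fin k // IsMixedColouring R B F c}

/-- A bichromatic 2-path `(x, u, y)`: `xu` red, `uy` blue, `xy` not an edge of `S(M)`. -/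
def IsBiPath {V : Type*} (R B F : SimpleGraph V) (x u y : V) : Prop :=
  R.Adj x u ∧ B.Adj u y ∧ ¬(R ⊔ B ⊔ F).Adj x y

/-- The number of bichromatic 2-paths. -/
noncomputable def numBiPaths {V : Type*} (R B F : SimpleGraph V) : ℕ :=
  Nat.card {p : V × V × V // IsBiPath R B F p.1 p.2.1 p.2.2}

/-- The graph `Λ(M)`: all edges of `S(M)` plus edges joining the ends of
bichromatic 2-paths. -/
def LambdaGraph {V : Type*} (R B F : SimpleGraph V) : SimpleGraph V where
  Adj a b := a ≠ b ∧ ((R ⊔ B ⊔ F).Adj a b ∨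
    ∃ w, IsBiPath R B F a w b ∨ IsBiPath R B F b w a)
  symm := ⟨by
    rintro a b ⟨hab, h⟩
    refine ⟨hab.symm, ?_⟩
    rcases h with h | ⟨w, h⟩
    · exact Or.inl h.symm
    · exact Or.inr ⟨w, h.symm⟩⟩
  loopless := ⟨fun a h => h.1 rfl⟩

/-- `(p.1, p.2)` is a pair of obstructing edges: `p.1` a red edge `ux`, `p.2` a blue edge
`vy`, with the subgraph of `Λ` induced on `{u, x, v, y}` of chromatic number 2. -/
def IsObstructingPair {V : Type*} (R B F : SimpleGraph V) (p : Sym2 V × Sym2 V) : Prop :=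
  ∃ u x v y : V, p.1 = s(u, x) ∧ p.2 = s(v, y) ∧ R.Adj u x ∧ B.Adj v y ∧
    (SimpleGraph.induce {u, x, v, y} (LambdaGraph R B F)).chromaticNumber = 2

/-- The number of pairs of obstructing edges. -/
noncomputable def numObstructing {V : Type*} (R B F : SimpleGraph V) : ℕ :=
  Nat.card {p : Sym2 V × Sym2 V // IsObstructingPair R B F p}

/-- The number of 3-element vertex subsets inducing a triangle. -/
noncomputable def numTriangles {V : Type*} (G : SimpleGraph V) : ℕ :=
  Nat.card {s : Finset V // s.card = 3 ∧ ∀ a ∈ s, ∀ b ∈ s, a ≠ b → G.Adj a b}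

/-- A 2-edge-coloured graph is chromatically invariant when for each `k` its number of
`k`-colourings equals the number of proper `k`-colourings of the underlying graph. -/
def ChromaticallyInvariant {V : Type*} (R B : SimpleGraph V) : Prop :=
  ∀ k : ℕ, Nat.card {c : V → Fin k // IsMixedColouring R B ⊥ c} =
    Nat.card {c : V → Fin k // ∀ u v, (R ⊔ B).Adj u v → c u ≠ c v}

/-- A graph is a join when its vertex set has a partition into two non-empty parts with
every vertex of one part adjacent to every vertex of the other. -/
def IsJoin {W : Type*} (G : SimpleGraph W) : Prop :=
  ∃ X Y : Set W, X.Nonempty ∧ Y.Nonempty ∧ Disjoint X Y ∧ X ∪ Y = Set.univ ∧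
    ∀ x ∈ X, ∀ y ∈ Y, G.Adj x y

/-- Disjoint union of two simple graphs. -/
def disjUnion {α β : Type*} (G : SimpleGraph α) (H : SimpleGraph β) :
    SimpleGraph (α ⊕ β) where
  Adj a b := match a, b with
    | Sum.inl a, Sum.inl b => G.Adj a b
    | Sum.inr a, Sum.inr b => H.Adj a b
    | _, _ => False
  symm := ⟨by rintro (a | a) (b | b) h <;> simp_all <;> exact h.symm⟩
  loopless := ⟨by rintro (a | a) h <;> exact (SimpleGraph.irrefl _) h⟩

/-- The complete bipartite "cross" graph between the two sides of a sum type. -/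
def crossGraph (α β : Type*) : SimpleGraph (α ⊕ β) where
  Adj a b := match a, b with
    | Sum.inl _, Sum.inr _ => True
    | Sum.inr _, Sum.inl _ => True
    | _, _ => False
  symm := ⟨by rintro (a | a) (b | b) h <;> trivial⟩
  loopless := ⟨by rintro (a | a) h <;> exact h⟩

/-!
A colouring of the join restricts to an injective colouring of the complete part `K` and to a
colouring of `G` avoiding the colours used on `K`. Blue edges never cross and every cross edge
joins differently coloured vertices, so the red/blue condition only matters inside `G`, or inside
`K`, where injectivity reduces it to `RK` and `BK` sharing no edge. Hence the colourings of the
join correspond to pairs of an embedding `K ↪ Fin k` and a colouring of `G` by the `k - n`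
remaining colours.
-/

open Function

section Recolouring

variable {V : Type*} (R B F : SimpleGraph V)

theorem isMixedColouring_comp_iff {k m : ℕ} {e : Fin k → Fin m} (he : Injective e)
    (c : V → Fin k) : IsMixedColouring R B F (e ∘ c) ↔ IsMixedColouring R B F c := by
  simp only [IsMixedColouring, comp_apply, he.ne_iff, he.eq_iff]

def mixedColouringsIntoEquiv {k m : ℕ} {T : Set (Fin k)} (e : T ≃ Fin m) :
    {c : V → Fin k // IsMixedColouring R B F c ∧ ∀ v, c v ∈ T} ≃
      {c : V → Fin m // IsMixedColouring R B F c} where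
  toFun c := ⟨fun v => e ⟨c.1 v, c.2.2 v⟩,
    (isMixedColouring_comp_iff R B F (Subtype.val_injective.comp e.symm.injective) _).1 <| by
      simpa [comp_def] using c.2.1⟩
  invFun c := ⟨fun v => e.symm (c.1 v),
    (isMixedColouring_comp_iff R B F (Subtype.val_injective.comp e.symm.injective) _).2 c.2,
    fun v => (e.symm (c.1 v)).2⟩
  left_inv c := by ext; simp
  right_inv c := by ext; simp

end Recolouring

section Join

variable {V W : Type*}

section Adj

variable {G : SimpleGraph V} {H : SimpleGraph W}

@[simp] theorem disjUnion_adj_inl_inl {a b : V} :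
    (disjUnion G H).Adj (.inl a) (.inl b) ↔ G.Adj a b := .rfl

@[simp] theorem disjUnion_adj_inr_inr {a b : W} :
    (disjUnion G H).Adj (.inr a) (.inr b) ↔ H.Adj a b := .rfl

@[simp] theorem not_disjUnion_adj_inl_inr {a : V} {b : W} :
    ¬(disjUnion G H).Adj (.inl a) (.inr b) := id

@[simp] theorem not_disjUnion_adj_inr_inl {a : W} {b : V} :
    ¬(disjUnion G H).Adj (.inr a) (.inl b) := id

@[simp] theorem not_crossGraph_adj_inl_inl {a b : V} : ¬(crossGraph V W).Adj (.inl a) (.inl b) :=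
  id

@[simp] theorem not_crossGraph_adj_inr_inr {a b : W} : ¬(crossGraph V W).Adj (.inr a) (.inr b) :=
  id

@[simp] theorem crossGraph_adj_inl_inr {a : V} {b : W} : (crossGraph V W).Adj (.inl a) (.inr b) :=
  trivial

end Adj

variable {R B : SimpleGraph V} {RK BK : SimpleGraph W} {k : ℕ}

theorem isMixedColouring_join_iff (hK : Disjoint RK BK) (hKtop : RK ⊔ BK = ⊤)
    (cV : V → Fin k) (cW : W → Fin k) :
    IsMixedColouring (disjUnion R RK ⊔ crossGraph V W) (disjUnion B BK) ⊥ (Sum.elim cV cW) ↔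
      IsMixedColouring R B ⊥ cV ∧ Injective cW ∧ ∀ v w, cV v ≠ cW w := by
  constructor
  · rintro ⟨hproper, hredBlue⟩
    refine ⟨⟨fun u v huv => hproper (.inl u) (.inl v) ?_,
      fun u x v y hr hb => hredBlue (.inl u) (.inl x) (.inl v) (.inl y) (Or.inl hr) hb⟩,
      fun w w' hww => ?_, fun v w => hproper (.inl v) (.inr w) (by simp)⟩
    · simpa using huv
    · by_contra hne
      have hadj : (RK ⊔ BK).Adj w w' := hKtop ▸ hne
      exact hproper (.inr w) (.inr w') (by simpa using hadj) hww
  · rintro ⟨⟨hproperV, hredBlueV⟩, hinj, hdiff⟩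
    refine ⟨?_, ?_⟩
    · rintro (u | u) (v | v) huv
      · exact hproperV u v (by simpa using huv)
      · exact hdiff u v
      · exact (hdiff v u).symm
      · exact hinj.ne fun h => huv.ne (congrArg Sum.inr h)
    · rintro (u | u) (x | x) (v | v) (y | y) hr hb hcol
      -- blue edges never cross, and any other case with endpoints on both sides is `hdiff`
      all_goals simp only [Sum.elim_inl, Sum.elim_inr] at hcol ⊢
      all_goals first
        | exact (not_disjUnion_adj_inl_inr hb).elim
        | exact (not_disjUnion_adj_inr_inl hb).elim
        | exact absurd hcol (hdiff _ _)
        | exact absurd hcol.symm (hdiff _ _)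
        | exact hdiff _ _
        | exact (hdiff _ _).symm
        | skip
      · exact hredBlueV u x v y (by simpa using hr) hb hcol
      · obtain rfl := hinj hcol
        intro hxy
        obtain rfl := hinj hxy
        exact hK.le_bot ⟨by simpa using hr, hb⟩

def joinColouringsEquiv (hK : Disjoint RK BK) (hKtop : RK ⊔ BK = ⊤) :
    {c : V ⊕ W → Fin k //
        IsMixedColouring (disjUnion R RK ⊔ crossGraph V W) (disjUnion B BK) ⊥ c} ≃
      Σ f : W ↪ Fin k, {c : V → Fin k // IsMixedColouring R B ⊥ c ∧ ∀ v, c v ∈ (Set.range f)ᶜ}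
    where
  toFun c :=
    have h := (isMixedColouring_join_iff hK hKtop (c.1 ∘ .inl) (c.1 ∘ .inr)).1 <| by
      simpa only [Sum.elim_comp_inl_inr] using c.2
    ⟨⟨c.1 ∘ .inr, h.2.1⟩, c.1 ∘ .inl, h.1, fun v ⟨w, hw⟩ => h.2.2 v w hw.symm⟩
  invFun p := ⟨Sum.elim p.2.1 p.1, (isMixedColouring_join_iff hK hKtop _ _).2
    ⟨p.2.2.1, p.1.injective, fun v w h => p.2.2.2 v ⟨w, h.symm⟩⟩⟩
  left_inv c := Subtype.ext (Sum.elim_comp_inl_inr c.1)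
  right_inv _ := rfl

end Join

theorem Nat.card_compl_range_embedding {W : Type*} {k : ℕ} (f : W ↪ Fin k) :
    Nat.card ↥(Set.range f)ᶜ = k - Nat.card W := by
  rw [Nat.card_coe_set_eq, Set.ncard_compl, ← Nat.card_coe_set_eq,
    Nat.card_range_of_injective f.injective, Nat.card_eq_fintype_card, Fintype.card_fin]

theorem numColourings_join_redComplete_general
    {V W : Type*} [Fintype W]
    (R B : SimpleGraph V)
    (RK BK : SimpleGraph W) (hK : Disjoint RK BK) (hKtop : RK ⊔ BK = ⊤)
    (n : ℕ) (hW : Fintype.card W = n) :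
    ∀ k : ℕ, n ≤ k →
      numColourings (disjUnion R RK ⊔ crossGraph V W) (disjUnion B BK) ⊥ k =
        (∏ i ∈ Finset.range n, (k - i)) * numColourings R B ⊥ (k - n) := by
  intro k _
  have hcompl (f : W ↪ Fin k) : Nat.card ↥(Set.range f)ᶜ = k - n := by
    rw [Nat.card_compl_range_embedding, Nat.card_eq_fintype_card, hW]
  calc numColourings (disjUnion R RK ⊔ crossGraph V W) (disjUnion B BK) ⊥ k
      = Nat.card (Σ _ : W ↪ Fin k, {c : V → Fin (k - n) // IsMixedColouring R B ⊥ c}) :=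
        Nat.card_congr <| (joinColouringsEquiv hK hKtop).trans <| Equiv.sigmaCongrRight fun f =>
          mixedColouringsIntoEquiv R B ⊥ (Finite.equivFinOfCardEq (hcompl f))
    _ = Nat.card (W ↪ Fin k) * numColourings R B ⊥ (k - n) := by
        rw [Nat.card_congr (Equiv.sigmaEquivProd _ _), Nat.card_prod]
        rfl
    _ = (∏ i ∈ Finset.range n, (k - i)) * numColourings R B ⊥ (k - n) := by
        rw [Nat.card_eq_fintype_card, Fintype.card_embedding_eq, Fintype.card_fin, hW,
          Nat.descFactorial_eq_prod_range]

/-- Joining a 2-edge-coloured graph `G` to a 2-edge-coloured complete graph on `n`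
vertices with all joining edges red: for `k ≥ n`, the number of `k`-colourings of the
join is `k(k-1)⋯(k-n+1)` times the number of `(k-n)`-colourings of `G`. -/
theorem numColourings_join_redComplete
    {V W : Type*} [Fintype V] [Fintype W]
    (R B : SimpleGraph V) (hRB : Disjoint R B)
    (RK BK : SimpleGraph W) (hK : Disjoint RK BK) (hKtop : RK ⊔ BK = ⊤)
    (n : ℕ) (hW : Fintype.card W = n) (hn : 1 ≤ n) :
    ∀ k : ℕ, n ≤ k →
      numColourings (disjUnion R RK ⊔ crossGraph V W) (disjUnion B BK) ⊥ k =
        (∏ i ∈ Finset.range n, (k - i)) * numColourings R B ⊥ (k - n) :=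
  numColourings_join_redComplete_general R B RK BK hK hKtop n hW
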